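/- arXiv:2602.05462 — 2 statements merged into one kernel-verified Lean document; each statement's English description precedes it below -/
import Mathlib

section
/- Let 1 ≤ s ≤ λ and 1 ≤ k ≤ n(λ−s+1), and set D := ⌊(n(λ−s+1)−k+1)/(s+1)⌋. Let y = (y_1|…|y_ℓ) with y_i ∈ F^{λ×η} be arbitrary, and let a_1,…,a_ℓ ∈ F and γ ∈ F be arbitrary. Then there exist coefficient vectors Q_0 ∈ F^{D+k} and Q_1,…,Q_s ∈ F^{D+1}, not all zero, such that Q_0(γ^{vλ+j})_{a_i} + Σ_{r=1}^{s} Q_r(y_{i, vλ+j+r−1})_{a_i} = 0 for all 1 ≤ i ≤ ℓ, 0 ≤ v ≤ η−1, and 0 ≤ j ≤ λ−s. -/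
noncomputable section

open Finset

variable {F : Type*} [Field F]

/-- Generalized power function `N_i(a) = ∏_{j<i} σ^j(a)` where `σ(x) = x^e`. -/
def genNorm (e : ℕ) (a : F) (i : ℕ) : F :=
  ∏ j ∈ Finset.range i, a ^ e ^ j

/-- Generalized operator evaluation of the skew polynomial with coefficient
vector `f` at `b` with respect to `a`, where `σ(x) = x^e`. -/
def opEval (e : ℕ) {k : ℕ} (f : Fin k → F) (a b : F) : F :=
  ∑ i : Fin k, f i * b ^ e ^ (i : ℕ) * genNorm e a i

/-- A coefficient vector as a function `ℕ → F` (zero beyond the length). -/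
def coeffFn {k : ℕ} (f : Fin k → F) : ℕ → F :=
  fun i => if h : i < k then f ⟨i, h⟩ else 0

/-- Skew product of coefficient sequences: `(f·g)_n = Σ_{i+j=n} f_i · σ^i(g_j)`,
where `σ(x) = x^e`. -/
def skewMul (e : ℕ) (f g : ℕ → F) : ℕ → F :=
  fun n => ∑ i ∈ Finset.range (n + 1), f i * g (n - i) ^ e ^ i

/-- `a` and `b` are σ-conjugate, where `σ(x) = x^e`. -/
def IsSigmaConj (e : ℕ) (a b : F) : Prop :=
  ∃ c : F, c ≠ 0 ∧ b = c ^ e * a * c⁻¹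

/-- `γ` is a generator of the multiplicative group of `F`. -/
def IsPrimitive (γ : F) : Prop :=
  ∀ x : F, x ≠ 0 → ∃ i : ℕ, γ ^ i = x

/-- Generalized operator evaluation of an `ℕ`-indexed coefficient sequence,
truncated at length `K`. -/
def opEvalN (e K : ℕ) (f : ℕ → F) (a b : F) : F :=
  ∑ i ∈ Finset.range K, f i * b ^ e ^ i * genNorm e a i

/-- Entry `c` of the `λ × η` matrix `Y` flattened column-wise:
row `c % λ`, column `c / λ`. -/
def matEnt {lam eta : ℕ} (Y : Matrix (Fin lam) (Fin eta) F) (c : ℕ) : F :=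
  if h : c % lam < lam ∧ c / lam < eta then Y ⟨c % lam, h.1⟩ ⟨c / lam, h.2⟩ else 0

/-- The `i`-th block of the `λ`-folded linearized Reed–Solomon codeword of `f`:
entry in row `u`, column `v` is `f(γ^{vλ+u})_a`. -/
def flrsWord (e : ℕ) {k : ℕ} (f : Fin k → F) (γ : F) (lam eta : ℕ) (a : F) :
    Matrix (Fin lam) (Fin eta) F :=
  Matrix.of fun u v => opEval e f a (γ ^ ((v : ℕ) * lam + (u : ℕ)))

/-! The interpolation conditions are `ℓ·η·(λ-s+1)` homogeneous linear equations
in the `(D+k) + s(D+1)` coefficients of `Q₀, …, Q_s`, and the choice of `D` makes the number of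
unknowns exceed the number of equations, so the kernel of the system is nontrivial. -/

def opEvalLinear (e k : ℕ) (a b : F) : (Fin k → F) →ₗ[F] F where
  toFun f := opEval e f a b
  map_add' f g := by simp only [opEval, Pi.add_apply, add_mul, sum_add_distrib]
  map_smul' c f := by simp only [opEval, Pi.smul_apply, smul_eq_mul, mul_assoc, ← mul_sum,
    RingHom.id_apply]

@[simp]
theorem opEvalLinear_apply (e k : ℕ) (a b : F) (f : Fin k → F) :
    opEvalLinear e k a b f = opEval e f a b :=
  rfl

section Interpolation

variable (e : ℕ) {lam eta ell : ℕ} (s T d₀ d₁ : ℕ) (y : Fin ell → Matrix (Fin lam) (Fin eta) F)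
  (a : Fin ell → F) (γ : F)

/-- Coordinate `(i, v, j)` is the left-hand side of the interpolation condition at position
`vλ + j` of block `i`. -/
def interpolationMap :
    (Fin d₀ → F) × (Fin s → Fin d₁ → F) →ₗ[F] (Fin ell × Fin eta × Fin T → F) :=
  LinearMap.pi fun p =>
    (opEvalLinear e d₀ (a p.1) (γ ^ ((p.2.1 : ℕ) * lam + p.2.2))).comp (LinearMap.fst F _ _) +
      ∑ r : Fin s,
        (opEvalLinear e d₁ (a p.1) (matEnt (y p.1) ((p.2.1 : ℕ) * lam + p.2.2 + r))).comp
          ((LinearMap.proj r).comp (LinearMap.snd F _ _))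

theorem interpolationMap_apply (Q : (Fin d₀ → F) × (Fin s → Fin d₁ → F))
    (p : Fin ell × Fin eta × Fin T) :
    interpolationMap e s T d₀ d₁ y a γ Q p =
      opEval e Q.1 (a p.1) (γ ^ ((p.2.1 : ℕ) * lam + p.2.2)) +
        ∑ r : Fin s, opEval e (Q.2 r) (a p.1) (matEnt (y p.1) ((p.2.1 : ℕ) * lam + p.2.2 + r)) := by
  simp [interpolationMap]

theorem exists_ne_zero_interpolationMap_eq_zero (h : ell * (eta * T) < d₀ + s * d₁) :
    ∃ Q ≠ 0, interpolationMap e s T d₀ d₁ y a γ Q = 0 := by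
  have hker : LinearMap.ker (interpolationMap e s T d₀ d₁ y a γ) ≠ ⊥ :=
    LinearMap.ker_ne_bot_of_finrank_lt <| by
      simpa [Module.finrank_prod, Module.finrank_pi_fintype] using h
  obtain ⟨Q, hQ, hQ0⟩ := Submodule.exists_mem_ne_zero_of_ne_bot hker
  exact ⟨Q, hQ0, hQ⟩

end Interpolation

theorem flrs_interpolation_exists_general
    {F : Type*} [Field F]
    (q lam eta ell : ℕ)
    (s k : ℕ)
    (y : Fin ell → Matrix (Fin lam) (Fin eta) F)
    (a : Fin ell → F) (γ : F) :
    ∃ (Q0 : Fin ((eta * ell * (lam - s + 1) - k + 1) / (s + 1) + k) → F)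
      (Q : Fin s → Fin ((eta * ell * (lam - s + 1) - k + 1) / (s + 1) + 1) → F),
      ¬(Q0 = 0 ∧ Q = 0) ∧
      ∀ (i : Fin ell) (v : Fin eta) (j : ℕ), j ≤ lam - s →
        opEval q Q0 (a i) (γ ^ ((v : ℕ) * lam + j)) +
          ∑ r : Fin s,
            opEval q (Q r) (a i) (matEnt (y i) ((v : ℕ) * lam + j + (r : ℕ))) = 0 := by
  set N := eta * ell * (lam - s + 1)
  set D := (N - k + 1) / (s + 1)
  have hcount : ell * (eta * (lam - s + 1)) < D + k + s * (D + 1) := by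
    have hD : N - k + 1 < D * (s + 1) + (s + 1) := Nat.lt_div_mul_add (Nat.succ_pos s)
    have hN : ell * (eta * (lam - s + 1)) = N := by ring
    have hunknowns : D + k + s * (D + 1) = D * (s + 1) + k + s := by ring
    omega
  obtain ⟨Q, hQ0, hQ⟩ := exists_ne_zero_interpolationMap_eq_zero q s (lam - s + 1) _ _ y a γ hcount
  refine ⟨Q.1, Q.2, fun h => hQ0 (Prod.ext h.1 h.2), fun i v j hj => ?_⟩
  simpa [interpolationMap_apply] using congrFun hQ (i, v, ⟨j, by omega⟩)

/-- Interpolation step for folded linearized Reed–Solomon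
codes: existence of a nonzero interpolation skew polynomial satisfying all
folded interpolation constraints of the received word `y`. -/
theorem flrs_interpolation_exists
    {F : Type*} [Field F] [Fintype F]
    (q m lam eta ell : ℕ) (hq : IsPrimePow q)
    (hm : 1 ≤ m) (hlam : 1 ≤ lam) (heta : 1 ≤ eta) (hell : 1 ≤ ell)
    (hcard : Fintype.card F = q ^ m)
    (s k : ℕ) (hs1 : 1 ≤ s) (hsl : s ≤ lam)
    (hk1 : 1 ≤ k) (hk2 : k ≤ eta * ell * (lam - s + 1))
    (y : Fin ell → Matrix (Fin lam) (Fin eta) F)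
    (a : Fin ell → F) (γ : F) :
    ∃ (Q0 : Fin ((eta * ell * (lam - s + 1) - k + 1) / (s + 1) + k) → F)
      (Q : Fin s → Fin ((eta * ell * (lam - s + 1) - k + 1) / (s + 1) + 1) → F),
      ¬(Q0 = 0 ∧ Q = 0) ∧
      ∀ (i : Fin ell) (v : Fin eta) (j : ℕ), j ≤ lam - s →
        opEval q Q0 (a i) (γ ^ ((v : ℕ) * lam + j)) +
          ∑ r : Fin s,
            opEval q (Q r) (a i) (matEnt (y i) ((v : ℕ) * lam + j + (r : ℕ))) = 0 :=
  flrs_interpolation_exists_general q lam eta ell s k y a γ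
end
end

section
/- Let 1 ≤ s ≤ m, let γ be a primitive element of F = 𝔽_{q^m}, let k ≥ 1, and let Q_0, Q_1,…,Q_s be coefficient vectors over F, not all zero. Let Sol := { f ∈ F^k : Q_0 + Σ_{j=1}^{s} Q_j·f·γ^{j−1} = 0 }, where · denotes the skew product. Then Sol is either empty or a coset of an 𝔽_q-linear subspace of F^k, and there exists a set B ⊆ {0,…,k−1} with |B| ≤ ⌈k/m⌉·(s−1) such that any two elements of Sol agreeing on all coordinates in B are equal. In particular, |Sol| ≤ q^{m·⌈k/m⌉·(s−1)}. -/
noncomputable section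

open Finset

variable {F : Type*} [Field F]

/-!
Regrouping the skew products by powers of the Frobenius `σ`, the `r`-th equation reads
`(Q_0)_r + Σ_i σ^i(f_{r-i}) P_i(σ^r γ) = 0` with `P_i = Σ_j (Q_j)_i X^j` of degree `< s`.
The left part is `𝔽_q`-linear in `f`, so the solutions form a coset of its kernel. If `n` is the
top index with `P_n ≠ 0` and `d` the top nonzero coordinate of a kernel element `f`, equation
`n + d` collapses to `σ^n(f_d) P_n(σ^{n+d} γ) = 0`, so `σ^{n+d} γ` is a root of `P_n`. The points
`σ^t γ` are `m`-periodic in `t` and distinct for `t < m`, so at most `⌈k/m⌉(s-1)` indices `d` are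
of this kind.
-/

open Polynomial

lemma LinearMap.setOf_add_eq_zero_eq_empty_or_coset {R M N : Type*} [Ring R] [AddCommGroup M]
    [Module R M] [AddCommGroup N] [Module R N] (L : M →ₗ[R] N) (c : N) :
    {f | c + L f = 0} = ∅ ∨
      ∃ (v : M) (U : Submodule R M), {f | c + L f = 0} = {f | f - v ∈ U} := by
  refine (Set.eq_empty_or_nonempty _).imp_right fun ⟨v, hv⟩ => ⟨v, LinearMap.ker L, ?_⟩
  ext f
  simp only [Set.mem_ofPred_eq, LinearMap.sub_mem_ker_iff] at hv ⊢
  rw [← hv, add_right_inj]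

lemma Set.ncard_le_card_pow_of_eqOn_imp_eq {ι α : Type*} [Fintype α] {S : Set (ι → α)}
    (B : Finset ι) (hS : ∀ f ∈ S, ∀ f' ∈ S, (∀ i ∈ B, f i = f' i) → f = f') :
    S.ncard ≤ Fintype.card α ^ #B := by
  classical
  calc S.ncard ≤ (Set.univ : Set (B → α)).ncard :=
        Set.ncard_le_ncard_of_injOn (fun f b => f b) (fun _ _ => trivial)
          fun f hf f' hf' h => hS f hf f' hf' fun i hi => congrFun h ⟨i, hi⟩
    _ = Fintype.card α ^ #B := by
        rw [Set.ncard_univ, Nat.card_eq_fintype_card, Fintype.card_fun, Fintype.card_coe]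

section CoeffFn

variable {k : ℕ}

@[simp]
lemma coeffFn_val (g : Fin k → F) (d : Fin k) : coeffFn g d = g d := by
  simp [coeffFn]

lemma coeffFn_of_le (g : Fin k → F) {n : ℕ} (h : k ≤ n) : coeffFn g n = 0 :=
  dif_neg h.not_gt

lemma coeffFn_add (g h : Fin k → F) : coeffFn (g + h) = coeffFn g + coeffFn h := by
  ext n
  simp only [coeffFn, Pi.add_apply]
  split_ifs <;> simp

lemma coeffFn_smul {R : Type*} [SMulZeroClass R F] (c : R) (g : Fin k → F) :
    coeffFn (c • g) = c • coeffFn g := by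
  ext n
  simp only [coeffFn, Pi.smul_apply]
  split_ifs <;> simp

lemma coeffFn_mul_pow (g : Fin k → F) (c : F) (q n : ℕ) :
    coeffFn (fun i : Fin k => g i * c ^ q ^ (i : ℕ)) n = coeffFn g n * c ^ q ^ n := by
  unfold coeffFn
  split <;> simp

end CoeffFn

section CoeffPoly

variable {s : ℕ} {K : Fin s → ℕ}

def coeffPoly (Q : ∀ j : Fin s, Fin (K j) → F) (i : ℕ) : F[X] :=
  ∑ j : Fin s, C (coeffFn (Q j) i) * X ^ (j : ℕ)

lemma coeffPoly_coeff (Q : ∀ j : Fin s, Fin (K j) → F) (i : ℕ) (j : Fin s) :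
    (coeffPoly Q i).coeff j = coeffFn (Q j) i := by
  simp [coeffPoly, coeff_X_pow, Fin.val_inj]

lemma coeffPoly_eq_zero_iff {Q : ∀ j : Fin s, Fin (K j) → F} {i : ℕ} :
    coeffPoly Q i = 0 ↔ ∀ j, coeffFn (Q j) i = 0 := by
  refine ⟨fun h j => by rw [← coeffPoly_coeff, h, coeff_zero], fun h => ?_⟩
  simp [coeffPoly, h]

lemma natDegree_coeffPoly_le (Q : ∀ j : Fin s, Fin (K j) → F) (i : ℕ) :
    (coeffPoly Q i).natDegree ≤ s - 1 :=
  natDegree_sum_le_of_forall_le _ _ fun j _ =>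
    (natDegree_C_mul_X_pow_le _ _).trans (by have := j.isLt; omega)

lemma exists_coeffPoly_ne_zero_and_eq_zero_of_lt {Q : ∀ j : Fin s, Fin (K j) → F}
    (h : ∃ i, coeffPoly Q i ≠ 0) :
    ∃ n, coeffPoly Q n ≠ 0 ∧ ∀ i, n < i → coeffPoly Q i = 0 := by
  have hbound : ∀ i, coeffPoly Q i ≠ 0 → i ≤ ∑ j, K j := by
    intro i hi
    by_contra! hlt
    refine hi (coeffPoly_eq_zero_iff.2 fun j => coeffFn_of_le _ ?_)
    exact (single_le_sum (fun j _ => Nat.zero_le (K j)) (mem_univ j)).trans hlt.le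
  classical
  obtain ⟨i, hi⟩ := h
  refine ⟨_, Nat.findGreatest_spec (P := fun i => coeffPoly Q i ≠ 0) (hbound i hi) hi,
    fun i' hlt => ?_⟩
  by_contra hne
  exact Nat.findGreatest_is_greatest hlt (hbound i' hne) hne

lemma sum_skewMul_eq (q : ℕ) (Q : ∀ j : Fin s, Fin (K j) → F) (γ : F) {k : ℕ}
    (g : Fin k → F) (r : ℕ) :
    ∑ j : Fin s, skewMul q (coeffFn (Q j))
        (coeffFn fun i : Fin k => g i * (γ ^ (j : ℕ)) ^ q ^ (i : ℕ)) r =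
      ∑ i ∈ range (r + 1), coeffFn g (r - i) ^ q ^ i * (coeffPoly Q i).eval (γ ^ q ^ r) := by
  unfold skewMul
  rw [sum_comm]
  refine sum_congr rfl fun i hi => ?_
  have hir : i ≤ r := Nat.lt_succ_iff.mp (mem_range.mp hi)
  simp only [coeffPoly, eval_finsetSum, eval_mul, eval_C, eval_pow, eval_X, mul_sum]
  refine sum_congr rfl fun j _ => ?_
  rw [coeffFn_mul_pow, mul_pow, ← pow_mul, ← pow_mul, ← pow_add, Nat.sub_add_cancel hir,
    mul_comm (j : ℕ), pow_mul]
  ring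

end CoeffPoly

lemma sum_range_map_mul_eval_eq (σ : ℕ → F →+* F) (a : ℕ → F) (P : ℕ → F[X]) (x : F)
    {n d : ℕ} (ha : ∀ j, d < j → a j = 0) (hP : ∀ i, n < i → P i = 0) :
    ∑ i ∈ range (n + d + 1), σ i (a (n + d - i)) * (P i).eval x = σ n (a d) * (P n).eval x := by
  rw [sum_eq_single_of_mem n (mem_range.2 (by omega)), Nat.add_sub_cancel_left]
  intro i _ hin
  rcases lt_or_gt_of_ne hin with h | h
  · rw [ha _ (by omega), map_zero, zero_mul]
  · rw [hP i h, eval_zero, mul_zero]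

lemma eq_zero_of_forall_sum_eq_zero {k : ℕ} (σ : ℕ → F →+* F) (P : ℕ → F[X]) (x : ℕ → F)
    {n : ℕ} (hP : ∀ i, n < i → P i = 0) {g : Fin k → F}
    (hg : ∀ r, ∑ i ∈ range (r + 1), σ i (coeffFn g (r - i)) * (P i).eval (x r) = 0)
    (hB : ∀ d : Fin k, (P n).eval (x (n + d)) = 0 → g d = 0) : g = 0 := by
  classical
  by_contra hne
  obtain ⟨d, hd, hmax⟩ := (univ.filter fun d => g d ≠ 0).exists_max_image id <| by
    simpa [Finset.Nonempty, funext_iff] using hne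
  have hgd : g d ≠ 0 := (mem_filter.1 hd).2
  have hlead : ∀ j, (d : ℕ) < j → coeffFn g j = 0 := by
    intro j hj
    unfold coeffFn
    split_ifs with hjk
    · by_contra hgj
      exact (hmax ⟨j, hjk⟩ (by simpa using hgj)).not_gt hj
    · rfl
  have h := hg (n + d)
  rw [sum_range_map_mul_eval_eq σ _ P _ hlead hP, coeffFn_val] at h
  rcases mul_eq_zero.1 h with h | h
  · exact hgd ((map_eq_zero (σ n)).1 h)
  · exact hgd (hB d h)

lemma card_filter_mod_mem_le {m : ℕ} (hm : 0 < m) (n k : ℕ) (S : Finset ℕ) :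
    #{d : Fin k | (n + d) % m ∈ S} ≤ (k + m - 1) / m * #S := by
  have hinj : Set.InjOn (fun d : Fin k => ((n + d) % m, (d : ℕ) / m))
      {d : Fin k | (n + d) % m ∈ S} := by
    intro a _ b _ hab
    simp only [Prod.mk.injEq] at hab
    have hmod : (a : ℕ) % m = b % m := Nat.ModEq.add_left_cancel' n hab.1
    ext
    rw [← Nat.div_add_mod (a : ℕ) m, ← Nat.div_add_mod (b : ℕ) m, hmod, hab.2]
  have hmaps : ∀ d ∈ ({d : Fin k | (n + d) % m ∈ S} : Finset (Fin k)),
      ((n + d) % m, (d : ℕ) / m) ∈ S ×ˢ range ((k + m - 1) / m) := by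
    intro d hd
    refine mem_product.2 ⟨(mem_filter.1 hd).2, mem_range.2 ?_⟩
    calc (d : ℕ) / m < (d + m) / m := by rw [Nat.add_div_right _ hm]; omega
      _ ≤ (k + m - 1) / m := Nat.div_le_div_right (by omega)
  calc _ ≤ #(S ×ˢ range ((k + m - 1) / m)) :=
        card_le_card_of_injOn _ hmaps (by simpa using hinj)
    _ = (k + m - 1) / m * #S := by rw [card_product, card_range, mul_comm]

lemma card_filter_eval_eq_zero_le [DecidableEq F] {m : ℕ} {x : ℕ → F}
    (hx : Set.InjOn x (range m)) {P : F[X]} (hP : P ≠ 0) :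
    #{t ∈ range m | P.eval (x t) = 0} ≤ P.natDegree := by
  refine (card_le_card_of_injOn x (t := P.roots.toFinset) (fun t ht => ?_)
    (hx.mono (coe_subset.2 (filter_subset _ _)))).trans
    ((Multiset.toFinset_card_le _).trans (card_roots' P))
  simpa [mem_roots hP] using (mem_filter.1 ht).2

lemma card_filter_eval_eq_zero_le_of_periodic [DecidableEq F] {m : ℕ} (hm : 0 < m) {x : ℕ → F}
    (hper : Function.Periodic x m) (hx : Set.InjOn x (range m)) {P : F[X]} (hP : P ≠ 0)
    (n k : ℕ) : #{d : Fin k | P.eval (x (n + d)) = 0} ≤ (k + m - 1) / m * P.natDegree := by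
  calc #{d : Fin k | P.eval (x (n + d)) = 0}
      = #{d : Fin k | (n + d) % m ∈ ({t ∈ range m | P.eval (x t) = 0} : Finset ℕ)} := by
        congr 1
        ext d
        simp [hper.map_mod_nat, Nat.mod_lt _ hm]
    _ ≤ _ := card_filter_mod_mem_le hm n k _
    _ ≤ _ := Nat.mul_le_mul_left _ (card_filter_eval_eq_zero_le hx hP)

section FiniteField

open FiniteField

variable {Fq : Type*} [Field Fq] [Fintype Fq] [Algebra Fq F]

lemma frobeniusAlgHom_pow_apply (i : ℕ) (x : F) :
    (frobeniusAlgHom Fq F ^ i) x = x ^ Fintype.card Fq ^ i := by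
  rw [AlgHom.coe_pow, coe_frobeniusAlgHom, pow_iterate]

lemma periodic_frobeniusAlgHom_pow_apply [Finite F] (x : F) :
    Function.Periodic (fun r => (frobeniusAlgHom Fq F ^ r) x) (Module.finrank Fq F) := by
  intro r
  simp only [pow_add, ← orderOf_frobeniusAlgHom, pow_orderOf_eq_one, mul_one]

/-- A primitive element generates `F` as a field, so the powers of Frobenius below the degree,
being distinct automorphisms, already differ on it. -/
lemma IsPrimitive.injOn_frobeniusAlgHom_pow_apply [Finite F] {γ : F} (hγ : IsPrimitive γ) :
    Set.InjOn (fun t => (frobeniusAlgHom Fq F ^ t) γ) (range (Module.finrank Fq F)) := by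
  intro t ht u hu h
  have hφ : frobeniusAlgHom Fq F ^ t = frobeniusAlgHom Fq F ^ u := by
    ext x
    rcases eq_or_ne x 0 with rfl | hx
    · simp
    · obtain ⟨i, rfl⟩ := hγ x hx
      simp only [map_pow]
      exact congrArg (· ^ i) h
  exact congrArg Fin.val <| (bijective_frobeniusAlgHom_pow Fq F).1
    (a₁ := ⟨t, by simpa using ht⟩) (a₂ := ⟨u, by simpa using hu⟩) hφ

variable (Fq) in
def keyEquationMap {s k : ℕ} {K : Fin s → ℕ} (Q : ∀ j : Fin s, Fin (K j) → F) (γ : F) :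
    (Fin k → F) →ₗ[Fq] ℕ → F where
  toFun g r := ∑ j : Fin s, skewMul (Fintype.card Fq) (coeffFn (Q j))
    (coeffFn fun i : Fin k => g i * (γ ^ (j : ℕ)) ^ Fintype.card Fq ^ (i : ℕ)) r
  map_add' g h := by
    ext r
    simp only [sum_skewMul_eq]
    simp only [← frobeniusAlgHom_pow_apply, coeffFn_add, Pi.add_apply, map_add, add_mul,
      sum_add_distrib]
  map_smul' c g := by
    ext r
    simp only [sum_skewMul_eq]
    simp only [← frobeniusAlgHom_pow_apply, coeffFn_smul, Pi.smul_apply, map_smul, smul_mul_assoc,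
      RingHom.id_apply, smul_sum]

lemma keyEquationMap_apply {s k : ℕ} {K : Fin s → ℕ} (Q : ∀ j : Fin s, Fin (K j) → F) (γ : F)
    (g : Fin k → F) (r : ℕ) :
    keyEquationMap Fq Q γ g r = ∑ i ∈ range (r + 1),
      (frobeniusAlgHom Fq F ^ i) (coeffFn g (r - i)) *
        (coeffPoly Q i).eval ((frobeniusAlgHom Fq F ^ r) γ) := by
  simp only [keyEquationMap, LinearMap.coe_mk, AddHom.coe_mk, sum_skewMul_eq,
    frobeniusAlgHom_pow_apply]

lemma exists_coeffPoly_ne_zero_of_add_keyEquationMap_eq_zero {s k K0 : ℕ} {K : Fin s → ℕ}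
    {Q0 : Fin K0 → F} {Q : ∀ j : Fin s, Fin (K j) → F} {γ : F}
    (hQ : ¬(coeffFn Q0 = 0 ∧ ∀ j, coeffFn (Q j) = 0)) {v : Fin k → F}
    (hv : coeffFn Q0 + keyEquationMap Fq Q γ v = 0) : ∃ i, coeffPoly Q i ≠ 0 := by
  by_contra! h0
  have hL : keyEquationMap Fq Q γ v = 0 := by
    ext r
    simp [keyEquationMap_apply, h0]
  exact hQ ⟨by simpa [hL] using hv, fun j => funext fun i => coeffPoly_eq_zero_iff.1 (h0 i) j⟩

variable (Fq) in
lemma exists_card_le_and_eq_zero_of_mem_ker_keyEquationMap [Finite F] {s k : ℕ}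
    {K : Fin s → ℕ} {Q : ∀ j : Fin s, Fin (K j) → F} {γ : F} (hγ : IsPrimitive γ)
    (hQ : ∃ i, coeffPoly Q i ≠ 0) :
    ∃ B : Finset (Fin k),
      #B ≤ (k + Module.finrank Fq F - 1) / Module.finrank Fq F * (s - 1) ∧
      ∀ g ∈ LinearMap.ker (keyEquationMap Fq Q γ), (∀ i ∈ B, g i = 0) → g = 0 := by
  classical
  obtain ⟨n, hn, hlast⟩ := exists_coeffPoly_ne_zero_and_eq_zero_of_lt hQ
  set x := fun r => (frobeniusAlgHom Fq F ^ r) γ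
  refine ⟨({d | (coeffPoly Q n).eval (x (n + d)) = 0} : Finset (Fin k)), ?_, fun g hg hB => ?_⟩
  · exact (card_filter_eval_eq_zero_le_of_periodic Module.finrank_pos
      (periodic_frobeniusAlgHom_pow_apply γ) hγ.injOn_frobeniusAlgHom_pow_apply hn n k).trans
      (Nat.mul_le_mul_left _ (natDegree_coeffPoly_le Q n))
  · exact eq_zero_of_forall_sum_eq_zero (fun i => (frobeniusAlgHom Fq F ^ i : F →ₐ[Fq] F)) _ x
      hlast (fun r => (keyEquationMap_apply Q γ g r).symm.trans (congrFun hg r))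
      fun d hd => hB d (by simpa using hd)

end FiniteField

theorem flrs_solution_space_structure_general
    {Fq F : Type*} [Field Fq] [Field F] [Algebra Fq F] [Fintype Fq] [Fintype F]
    (q m : ℕ)
    (hcardq : Fintype.card Fq = q) (hcardF : Fintype.card F = q ^ m)
    (s : ℕ)
    (γ : F) (hprim : IsPrimitive γ) (k : ℕ)
    (K0 : ℕ) (Q0 : Fin K0 → F) (K : Fin s → ℕ) (Q : ∀ j : Fin s, Fin (K j) → F)
    (hQ : ¬(coeffFn Q0 = 0 ∧ ∀ j, coeffFn (Q j) = 0))
    (Sol : Set (Fin k → F))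
    (hSol : Sol = {f | ∀ r : ℕ, coeffFn Q0 r +
        ∑ j : Fin s,
          skewMul q (coeffFn (Q j))
            (coeffFn fun i : Fin k => f i * (γ ^ (j : ℕ)) ^ q ^ (i : ℕ)) r = 0}) :
    (Sol = ∅ ∨ ∃ (v : Fin k → F) (U : Submodule Fq (Fin k → F)),
        Sol = {f | f - v ∈ U}) ∧
    (∃ B : Finset (Fin k), B.card ≤ (k + m - 1) / m * (s - 1) ∧
      ∀ f ∈ Sol, ∀ f' ∈ Sol, (∀ i ∈ B, f i = f' i) → f = f') ∧
    Sol.ncard ≤ q ^ (m * ((k + m - 1) / m * (s - 1))) := by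
  subst hcardq
  set L := keyEquationMap Fq Q γ (k := k)
  have hdeg : Module.finrank Fq F = m :=
    Nat.pow_right_injective Fintype.one_lt_card (Module.card_eq_pow_finrank.symm.trans hcardF)
  have hSol' : Sol = {f | coeffFn Q0 + L f = 0} := by
    rw [hSol]
    ext f
    simp only [Set.mem_ofPred_eq, funext_iff]
    rfl
  have hdet : ∃ B : Finset (Fin k), #B ≤ (k + m - 1) / m * (s - 1) ∧
      ∀ f ∈ Sol, ∀ f' ∈ Sol, (∀ i ∈ B, f i = f' i) → f = f' := by
    rcases Sol.eq_empty_or_nonempty with h | ⟨v, hv⟩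
    · exact ⟨∅, by simp, by simp [h]⟩
    rw [hSol'] at hv ⊢
    obtain ⟨B, hB, hker⟩ := exists_card_le_and_eq_zero_of_mem_ker_keyEquationMap Fq hprim
      (exists_coeffPoly_ne_zero_of_add_keyEquationMap_eq_zero hQ hv)
    exact ⟨B, hdeg ▸ hB, fun f hf f' hf' hBeq => sub_eq_zero.1 <|
      hker _ (L.sub_mem_ker_iff.2 (add_left_cancel (hf.trans hf'.symm)))
        fun i hi => sub_eq_zero.2 (hBeq i hi)⟩
  obtain ⟨B, hB, hBdet⟩ := hdet
  refine ⟨hSol' ▸ L.setOf_add_eq_zero_eq_empty_or_coset (coeffFn Q0), ⟨B, hB, hBdet⟩, ?_⟩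
  calc Sol.ncard ≤ Fintype.card F ^ #B := Set.ncard_le_card_pow_of_eqOn_imp_eq B hBdet
    _ ≤ (Fintype.card Fq ^ m) ^ ((k + m - 1) / m * (s - 1)) :=
        hcardF ▸ Nat.pow_le_pow_right Fintype.card_pos hB
    _ = _ := (pow_mul _ _ _).symm

/-- Structure of the solution space of the FLRS key equation:
it is empty or a coset of an `𝔽_q`-subspace of `F^k`, and it is determined by
at most `⌈k/m⌉(s−1)` coordinates; in particular it has at most
`q^{m⌈k/m⌉(s−1)}` elements. -/
theorem flrs_solution_space_structure
    {Fq F : Type*} [Field Fq] [Field F] [Algebra Fq F] [Fintype Fq] [Fintype F]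
    (q m : ℕ) (hq : IsPrimePow q) (hm : 1 ≤ m)
    (hcardq : Fintype.card Fq = q) (hcardF : Fintype.card F = q ^ m)
    (s : ℕ) (hs1 : 1 ≤ s) (hsm : s ≤ m)
    (γ : F) (hprim : IsPrimitive γ) (k : ℕ) (hk : 1 ≤ k)
    (K0 : ℕ) (Q0 : Fin K0 → F) (K : Fin s → ℕ) (Q : ∀ j : Fin s, Fin (K j) → F)
    (hQ : ¬(coeffFn Q0 = 0 ∧ ∀ j, coeffFn (Q j) = 0))
    (Sol : Set (Fin k → F))
    (hSol : Sol = {f | ∀ r : ℕ, coeffFn Q0 r +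
        ∑ j : Fin s,
          skewMul q (coeffFn (Q j))
            (coeffFn fun i : Fin k => f i * (γ ^ (j : ℕ)) ^ q ^ (i : ℕ)) r = 0}) :
    (Sol = ∅ ∨ ∃ (v : Fin k → F) (U : Submodule Fq (Fin k → F)),
        Sol = {f | f - v ∈ U}) ∧
    (∃ B : Finset (Fin k), B.card ≤ (k + m - 1) / m * (s - 1) ∧
      ∀ f ∈ Sol, ∀ f' ∈ Sol, (∀ i ∈ B, f i = f' i) → f = f') ∧
    Sol.ncard ≤ q ^ (m * ((k + m - 1) / m * (s - 1))) :=
  flrs_solution_space_structure_general q m hcardq hcardF s γ hprim k K0 Q0 K Q hQ Sol hSol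
end
end
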